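/- In QHC, the modality □ defined by □p := ?!p satisfies the S4 laws: ⊢ □p → p, ⊢ □p → □□p, ⊢ □(p→q) → (□p → □q), and the necessitation rule: from ⊢ p infer ⊢ □p. -/

import Mathlib

/- Problem (intuitionistic) formulas and proposition (classical) formulas of QHC. -/
mutual
inductive PF : Type
  | var : Nat → PF
  | bot : PF
  | and : PF → PF → PF
  | or : PF → PF → PF
  | imp : PF → PF → PF
  | bang : CF → PF
inductive CF : Type
  | var : Nat → CF
  | fls : CF
  | and : CF → CF → CF
  | or : CF → CF → CF
  | imp : CF → CF → CF
  | quest : PF → CF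
end

def PF.neg (α : PF) : PF := α.imp PF.bot
def CF.neg (p : CF) : CF := p.imp CF.fls
def PF.iff (α β : PF) : PF := (α.imp β).and (β.imp α)
def CF.iff (p q : CF) : CF := (p.imp q).and (q.imp p)
def CF.box (p : CF) : CF := CF.quest (PF.bang p)
def PF.nabla (α : PF) : PF := PF.bang (CF.quest α)

/- Derivability in QHC, parameterized by a set `Ax` of extra problem axioms
(used to treat the axiom ¬!0 and its variants uniformly). Intuitionistic logic
on problems, classical logic on propositions, the rules α ⊢ ?α and p ⊢ !p, and
the mixed axioms ?!p → p, α → !?α, !(p→q) → (!p → !q), ?(α→β) → (?α → ?β). -/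
mutual
inductive ProvP (Ax : PF → Prop) : PF → Prop
  | axm {α} : Ax α → ProvP Ax α
  | mp {α β} : ProvP Ax (α.imp β) → ProvP Ax α → ProvP Ax β
  | ak (α β : PF) : ProvP Ax (α.imp (β.imp α))
  | as (α β γ : PF) : ProvP Ax ((α.imp (β.imp γ)).imp ((α.imp β).imp (α.imp γ)))
  | andI (α β : PF) : ProvP Ax (α.imp (β.imp (α.and β)))
  | andE1 (α β : PF) : ProvP Ax ((α.and β).imp α)
  | andE2 (α β : PF) : ProvP Ax ((α.and β).imp β)
  | orI1 (α β : PF) : ProvP Ax (α.imp (α.or β))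
  | orI2 (α β : PF) : ProvP Ax (β.imp (α.or β))
  | orE (α β γ : PF) : ProvP Ax ((α.imp γ).imp ((β.imp γ).imp ((α.or β).imp γ)))
  | exf (α : PF) : ProvP Ax (PF.bot.imp α)
  | bangIntro {p} : ProvC Ax p → ProvP Ax (PF.bang p)
  | bangImp (p q : CF) : ProvP Ax ((PF.bang (p.imp q)).imp ((PF.bang p).imp (PF.bang q)))
  | bangQuest (α : PF) : ProvP Ax (α.imp (PF.bang (CF.quest α)))
inductive ProvC (Ax : PF → Prop) : CF → Prop
  | mp {p q} : ProvC Ax (p.imp q) → ProvC Ax p → ProvC Ax q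
  | ak (p q : CF) : ProvC Ax (p.imp (q.imp p))
  | as (p q r : CF) : ProvC Ax ((p.imp (q.imp r)).imp ((p.imp q).imp (p.imp r)))
  | andI (p q : CF) : ProvC Ax (p.imp (q.imp (p.and q)))
  | andE1 (p q : CF) : ProvC Ax ((p.and q).imp p)
  | andE2 (p q : CF) : ProvC Ax ((p.and q).imp q)
  | orI1 (p q : CF) : ProvC Ax (p.imp (p.or q))
  | orI2 (p q : CF) : ProvC Ax (q.imp (p.or q))
  | orE (p q r : CF) : ProvC Ax ((p.imp r).imp ((q.imp r).imp ((p.or q).imp r)))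
  | exf (p : CF) : ProvC Ax (CF.fls.imp p)
  | lem (p : CF) : ProvC Ax (p.or (p.imp CF.fls))
  | questIntro {α} : ProvP Ax α → ProvC Ax (CF.quest α)
  | questImp (α β : PF) : ProvC Ax ((CF.quest (α.imp β)).imp ((CF.quest α).imp (CF.quest β)))
  | questBang (p : CF) : ProvC Ax ((CF.quest (PF.bang p)).imp p)
end

/-- The axiom (!⊥): ¬!0. -/
def QHCAx : PF → Prop := fun α => α = (PF.bang CF.fls).imp PF.bot

/-- Derivability of a problem in QHC. -/
def PrvP (α : PF) : Prop := ProvP QHCAx α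
/-- Derivability of a proposition in QHC. -/
def PrvC (p : CF) : Prop := ProvC QHCAx p

/-! `?` is monotone along provable problem implications: the rule `α ⊢ ?α` and the axiom
`?(α → β) → (?α → ?β)` turn `⊢ α → β` into `⊢ ?α → ?β`. For `□ = ?!`, axiom T is `?!p → p`,
axiom 4 is the monotone image of `!p → !?!p`, axiom K is the monotone image of `!`-distribution
followed by `?`-distribution, and necessitation chains the rules `p ⊢ !p` and `!p ⊢ ?!p`. -/

namespace ProvC

variable {Ax : PF → Prop}

theorem imp_trans {p q r : CF} (hpq : ProvC Ax (p.imp q)) (hqr : ProvC Ax (q.imp r)) :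
    ProvC Ax (p.imp r) :=
  mp (mp (as p q r) (mp (ak _ p) hqr)) hpq

theorem quest_mono {α β : PF} (h : ProvP Ax (α.imp β)) :
    ProvC Ax ((CF.quest α).imp (CF.quest β)) :=
  mp (questImp α β) (questIntro h)

theorem box_imp_self (p : CF) : ProvC Ax ((CF.box p).imp p) :=
  questBang p

theorem box_imp_box_box (p : CF) : ProvC Ax ((CF.box p).imp (CF.box (CF.box p))) :=
  quest_mono (ProvP.bangQuest (PF.bang p))

theorem box_imp_distrib (p q : CF) :
    ProvC Ax ((CF.box (p.imp q)).imp ((CF.box p).imp (CF.box q))) :=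
  imp_trans (quest_mono (ProvP.bangImp p q)) (questImp _ _)

theorem box_of_prov {p : CF} (h : ProvC Ax p) : ProvC Ax (CF.box p) :=
  questIntro (ProvP.bangIntro h)

end ProvC

theorem qhc_box_s4 :
    (∀ p : CF, PrvC ((CF.box p).imp p)) ∧
    (∀ p : CF, PrvC ((CF.box p).imp (CF.box (CF.box p)))) ∧
    (∀ p q : CF, PrvC ((CF.box (p.imp q)).imp ((CF.box p).imp (CF.box q)))) ∧
    (∀ p : CF, PrvC p → PrvC (CF.box p)) :=
  ⟨ProvC.box_imp_self, ProvC.box_imp_box_box, ProvC.box_imp_distrib,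
    fun _ => ProvC.box_of_prov⟩
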